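/- arXiv:1604.02042 — 4 statements merged into one kernel-verified Lean document; each statement's English description precedes it below -/
import Mathlib

section
/- Let p, p' be probability distributions on {1,...,N} with p nonincreasing (p_k ≤ p_m whenever k > m), let f : {1,...,N} → ℝ be a nondecreasing sequence, and suppose there exists a doubly stochastic N×N matrix A with p'_k = ∑_m A_{k,m} p_m for all k. Then ∑_k f_k p'_k ≥ ∑_k f_k p_k. -/
open Finset

/-- Lemma 1: if `p'` is obtained from a nonincreasing probability distribution `p`
by a doubly stochastic matrix, then the expectation of any nondecreasing sequence
`f` cannot decrease. -/
theorem stmt0 (N : ℕ) (p p' f : Fin N → ℝ)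
    (hp0 : ∀ k, 0 ≤ p k) (hp1 : ∑ k, p k = 1)
    (hp'0 : ∀ k, 0 ≤ p' k) (hp'1 : ∑ k, p' k = 1)
    (hpmono : ∀ k m : Fin N, m ≤ k → p k ≤ p m)
    (hf : ∀ k m : Fin N, k ≤ m → f k ≤ f m)
    (hA : ∃ A : Matrix (Fin N) (Fin N) ℝ,
      (∀ k m, 0 ≤ A k m) ∧ (∀ k, ∑ m, A k m = 1) ∧ (∀ m, ∑ k, A k m = 1) ∧
      (∀ k, p' k = ∑ m, A k m * p m)) :
    ∑ k, f k * p' k ≥ ∑ k, f k * p k := by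
  obtain ⟨A, hA0, hArow, hAcol, hAp⟩ := hA
  have hmem : A ∈ doublyStochastic ℝ (Fin N) := by
    rw [mem_doublyStochastic_iff_sum]
    exact ⟨hA0, hArow, hAcol⟩
  obtain ⟨w, hw0, hw1, hwA⟩ := exists_eq_sum_perm_of_mem_doublyStochastic hmem
  have hanti : Antivary f p := by
    intro i j hpij
    rcases le_total j i with h | h
    · exact hf j i h
    · exact absurd (hpmono j i h) (not_le.2 hpij)
  have hp'k : ∀ k, p' k = ∑ σ : Equiv.Perm (Fin N), w σ * p (σ k) := by
    intro k
    rw [hAp k]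
    have : ∀ m, A k m = ∑ σ : Equiv.Perm (Fin N), w σ * (if σ k = m then 1 else 0) := by
      intro m
      rw [← hwA]
      simp [Matrix.sum_apply, Equiv.Perm.permMatrix, PEquiv.toMatrix_apply,
        Equiv.toPEquiv_apply]
    simp_rw [this, Finset.sum_mul]
    rw [Finset.sum_comm]
    congr 1
    ext σ
    simp [mul_ite, Finset.sum_ite_eq]
  calc ∑ k, f k * p k = ∑ σ : Equiv.Perm (Fin N), w σ * ∑ k, f k * p k := by
        rw [← Finset.sum_mul, hw1, one_mul]
    _ ≤ ∑ σ : Equiv.Perm (Fin N), w σ * ∑ k, f k * p (σ k) :=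
        Finset.sum_le_sum fun σ _ =>
          mul_le_mul_of_nonneg_left (hanti.sum_mul_le_sum_mul_comp_perm) (hw0 σ)
    _ = ∑ k, f k * p' k := by
        simp_rw [hp'k, Finset.mul_sum]
        rw [Finset.sum_comm]
        congr 1; ext σ; congr 1; ext k; ring
end

section
/- Let {p_k} be a nonincreasing probability distribution on {1,...,N}, let P be a doubly stochastic matrix, and set p' = P·p. Then ∑_k p'_k ln k ≥ ∑_k p_k ln k. -/
open Finset

/-- If `p` is a nonincreasing probability distribution and `p' = P·p` with `P`
doubly stochastic, then `∑ p'_k ln k ≥ ∑ p_k ln k` (indices labelled `1,…,N`). -/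
theorem stmt5 (N : ℕ) (p : Fin N → ℝ)
    (hp0 : ∀ k, 0 ≤ p k) (hp1 : ∑ k, p k = 1)
    (hpmono : ∀ k m : Fin N, m ≤ k → p k ≤ p m)
    (P : Matrix (Fin N) (Fin N) ℝ)
    (hP0 : ∀ k m, 0 ≤ P k m) (hProw : ∀ k, ∑ m, P k m = 1) (hPcol : ∀ m, ∑ k, P k m = 1)
    (p' : Fin N → ℝ) (hp' : ∀ k, p' k = ∑ m, P k m * p m) :
    ∑ k, p' k * Real.log (k.1 + 1) ≥ ∑ k, p k * Real.log (k.1 + 1) := by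
  set d : ℕ → ℝ := fun j => Real.log (j + 2) - Real.log (j + 1) with hd
  have hd0 : ∀ j : ℕ, 0 ≤ d j := by
    intro j
    have : Real.log (j + 1) ≤ Real.log (j + 2) := by
      apply Real.log_le_log (by positivity) (by push_cast; linarith)
    simp [hd]; linarith
  -- rewrite a weighted log-sum via tail sums
  have key : ∀ q : Fin N → ℝ, ∑ k, q k * Real.log (k.1 + 1)
      = ∑ j ∈ Finset.range N, (∑ k ∈ univ.filter (fun k : Fin N => j < k.1), q k) * d j := by
    intro q
    have hlog : ∀ k : Fin N, Real.log (k.1 + 1) = ∑ j ∈ Finset.range k.1, d j := by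
      intro k
      have h := Finset.sum_range_sub (fun i : ℕ => Real.log ((i : ℝ) + 1)) k.1
      have : ∀ j : ℕ, (fun i : ℕ => Real.log ((i : ℝ) + 1)) (j + 1)
          - (fun i : ℕ => Real.log ((i : ℝ) + 1)) j = d j := by
        intro j; simp [hd]; push_cast; ring_nf
      rw [Finset.sum_congr rfl (fun j _ => this j)] at h
      rw [h]; simp
    calc ∑ k, q k * Real.log (k.1 + 1)
        = ∑ k, ∑ j ∈ Finset.range N, (if j < k.1 then q k * d j else 0) := by
          apply Finset.sum_congr rfl; intro k _
          rw [hlog k, Finset.mul_sum, ← Finset.sum_filter]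
          congr 1
          ext j
          simp only [Finset.mem_filter, Finset.mem_range]
          have := k.isLt; omega
      _ = ∑ j ∈ Finset.range N, ∑ k, (if j < k.1 then q k * d j else 0) := Finset.sum_comm
      _ = ∑ j ∈ Finset.range N, (∑ k ∈ univ.filter (fun k : Fin N => j < k.1), q k) * d j := by
          apply Finset.sum_congr rfl; intro j _
          rw [← Finset.sum_filter, Finset.sum_mul]
  -- tail sums of p' dominate those of p
  have tail : ∀ j : ℕ, ∑ k ∈ univ.filter (fun k : Fin N => j < k.1), p k
      ≤ ∑ k ∈ univ.filter (fun k : Fin N => j < k.1), p' k := by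
    intro j
    set S := univ.filter (fun k : Fin N => j < k.1) with hSdef
    by_cases hj : j + 1 < N
    · set v := p ⟨j + 1, hj⟩ with hv
      set c : Fin N → ℝ := fun m => ∑ k ∈ S, P k m with hc
      have hS_p' : ∑ k ∈ S, p' k = ∑ m, c m * p m := by
        simp only [hp']
        rw [Finset.sum_comm]
        exact Finset.sum_congr rfl fun m _ => (Finset.sum_mul ..).symm
      have hcard : ∑ m, c m = (S.card : ℝ) := by
        simp only [hc]
        rw [Finset.sum_comm]
        simp [hProw]
      have hchi : ∑ m, (if m ∈ S then (1 : ℝ) else 0) = (S.card : ℝ) := by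
        simp [Finset.sum_ite_mem]
      have hc0 : ∀ m, 0 ≤ c m := fun m => Finset.sum_nonneg fun k _ => hP0 k m
      have hc1 : ∀ m, c m ≤ 1 := by
        intro m
        rw [← hPcol m]
        exact Finset.sum_le_sum_of_subset_of_nonneg (Finset.subset_univ S)
          (fun k _ _ => hP0 k m)
      have hSp : ∑ k ∈ S, p k = ∑ m, (if m ∈ S then (1 : ℝ) else 0) * p m := by
        rw [Finset.sum_congr rfl (fun m _ => by split <;> simp : ∀ m ∈ univ,
          (if m ∈ S then (1 : ℝ) else 0) * p m = if m ∈ S then p m else 0)]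
        simp [Finset.sum_ite_mem]
      have hstep : ∀ m : Fin N, (c m - (if m ∈ S then 1 else 0)) * v
          ≤ (c m - (if m ∈ S then 1 else 0)) * p m := by
        intro m
        by_cases hm : m ∈ S
        · have hmj : j < m.1 := by
            simpa [hSdef] using hm
          have hpm : p m ≤ v := by
            apply hpmono m ⟨j + 1, hj⟩
            rw [Fin.le_def]; simpa using hmj
          have h1 : c m - 1 ≤ 0 := by linarith [hc1 m]
          simp only [hm, if_pos]
          nlinarith
        · have hmj : m.1 ≤ j := by
            by_contra h
            exact hm (by simp [hSdef]; omega)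
          have hpm : v ≤ p m := by
            apply hpmono ⟨j + 1, hj⟩ m
            rw [Fin.le_def]; simpa using Nat.le_succ_of_le hmj
          simp only [hm, if_neg, not_false_iff, sub_zero]
          nlinarith [hc0 m]
      have hsum := Finset.sum_le_sum (fun m (_ : m ∈ univ) => hstep m)
      have hzero : ∑ m, (c m - (if m ∈ S then (1 : ℝ) else 0)) * v = 0 := by
        rw [← Finset.sum_mul, Finset.sum_sub_distrib, hcard, hchi]
        ring
      have hsplit : ∑ m, (c m - (if m ∈ S then (1 : ℝ) else 0)) * p m
          = ∑ m, c m * p m - ∑ m, (if m ∈ S then (1 : ℝ) else 0) * p m := by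
        rw [← Finset.sum_sub_distrib]
        exact Finset.sum_congr rfl fun m _ => by ring
      rw [hzero, hsplit] at hsum
      rw [hS_p', hSp]
      linarith
    · have hSempty : S = ∅ := by
        ext k
        simp only [hSdef, Finset.mem_filter, Finset.mem_univ, true_and, Finset.notMem_empty,
          iff_false]
        have := k.isLt; omega
      simp [hSempty]
  rw [ge_iff_le, key p, key p']
  exact Finset.sum_le_sum fun j _ => mul_le_mul_of_nonneg_right (tail j) (hd0 j)
end

section
/- (Quantum H-theorem with degeneracies.) Let ε⁰, ε^τ : {1,...,N} → ℝ be nondecreasing functions with level-set partitions A⁰_k and A^τ_k respectively, and define ln 𝒩⁰_k = (1/|A⁰_k|)∑_{q∈A⁰_k} ln q and similarly ln 𝒩^τ_k. Let p be a probability distribution on {1,...,N} that is nonincreasing and constant on each A⁰_k, let P be any doubly stochastic matrix, and set p' = P·p. Then ∑_k p'_k ln 𝒩^τ_k ≥ ∑_k p_k ln 𝒩⁰_k. -/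
open Finset


lemma key1 {N : ℕ} (p : Fin N → ℝ) (hpa : ∀ k m : Fin N, m ≤ k → p k ≤ p m)
    (c : Fin N → ℝ) (hc0 : ∀ m, 0 ≤ c m) (hc1 : ∀ m, c m ≤ 1) (j : Fin N)
    (hsum : ∑ m, c m = ((univ.filter (fun k : Fin N => j.1 ≤ k.1)).card : ℝ)) :
    ∑ m ∈ univ.filter (fun k : Fin N => j.1 ≤ k.1), p m ≤ ∑ m, c m * p m := by
  have key : ∀ m : Fin N,
      (c m - if j.1 ≤ m.1 then 1 else 0) * p j
        ≤ (c m - if j.1 ≤ m.1 then 1 else 0) * p m := by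
    intro m
    by_cases h : j.1 ≤ m.1
    · have hp : p m ≤ p j := hpa m j (Fin.le_def.mpr h)
      simp only [if_pos h]
      nlinarith [hc1 m]
    · have hp : p j ≤ p m := hpa j m (Fin.le_def.mpr (Nat.le_of_lt (Nat.lt_of_not_le h)))
      simp only [if_neg h]
      nlinarith [hc0 m]
  have h1 : ∑ m, (c m - if j.1 ≤ m.1 then 1 else 0) * p j
      ≤ ∑ m, (c m - if j.1 ≤ m.1 then 1 else 0) * p m :=
    Finset.sum_le_sum fun m _ => key m
  have h2 : ∑ m, (c m - if j.1 ≤ m.1 then 1 else 0) * p j = 0 := by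
    rw [← Finset.sum_mul]
    have he : ∑ m : Fin N, (c m - if j.1 ≤ m.1 then 1 else 0)
        = ∑ m : Fin N, c m - ∑ m : Fin N, (if j.1 ≤ m.1 then (1:ℝ) else 0) := by
      rw [Finset.sum_sub_distrib]
    rw [he, Finset.sum_boole, hsum]
    simp
  have h3 : ∑ m, (c m - if j.1 ≤ m.1 then 1 else 0) * p m
      = ∑ m, c m * p m - ∑ m ∈ univ.filter (fun k : Fin N => j.1 ≤ k.1), p m := by
    rw [Finset.sum_filter, ← Finset.sum_sub_distrib]
    refine Finset.sum_congr rfl fun m _ => ?_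
    by_cases h : j.1 ≤ m.1 <;> simp [h] <;> ring
  rw [h2, h3] at h1
  linarith


lemma abel_ge {n : ℕ} (g : Fin (n+1) → ℝ) (hg : Monotone g)
    (p x : Fin (n+1) → ℝ)
    (htot : ∑ k, x k = ∑ k, p k)
    (htail : ∀ j : ℕ, 0 < j → j < n+1 →
      ∑ k ∈ univ.filter (fun k : Fin (n+1) => j ≤ k.1), p k ≤
        ∑ k ∈ univ.filter (fun k : Fin (n+1) => j ≤ k.1), x k) :
    ∑ k, p k * g k ≤ ∑ k, x k * g k := by
  set d : ℕ → ℝ := fun j => if j = 0 then g ⟨0, by omega⟩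
      else g ⟨min j n, by omega⟩ - g ⟨min (j-1) n, by omega⟩ with hd
  have claim1 : ∀ y : Fin (n+1) → ℝ,
      ∑ k, y k * g k
        = ∑ j ∈ range (n+1), d j * ∑ k ∈ univ.filter (fun k : Fin (n+1) => j ≤ k.1), y k := by
    intro y
    have step1 : ∀ j ∈ range (n+1),
        d j * ∑ k ∈ univ.filter (fun k : Fin (n+1) => j ≤ k.1), y k
          = ∑ k : Fin (n+1), if j ≤ k.1 then d j * y k else 0 := by
      intro j _
      rw [Finset.sum_filter, Finset.mul_sum]
      exact Finset.sum_congr rfl fun k _ => by by_cases h : j ≤ k.1 <;> simp [h]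
    rw [Finset.sum_congr rfl step1, Finset.sum_comm]
    refine Finset.sum_congr rfl fun k _ => ?_
    have hk := k.isLt
    have hset : (range (n+1)).filter (fun j => j ≤ k.1) = range (k.1+1) := by
      ext a
      simp only [mem_filter, mem_range]
      omega
    have hstep : ∑ j ∈ range (n+1), (if j ≤ k.1 then d j * y k else 0)
        = ∑ j ∈ (range (n+1)).filter (fun j => j ≤ k.1), d j * y k := (Finset.sum_filter _ _).symm
    rw [hstep, hset, ← Finset.sum_mul]
    have htel : ∑ j ∈ range (k.1+1), d j = g ⟨min k.1 n, by omega⟩ := by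
      rw [Finset.sum_range_succ']
      have h2 : ∀ i, d (i+1) = g ⟨min (i+1) n, by omega⟩ - g ⟨min i n, by omega⟩ := by
        intro i; simp [hd]
      rw [Finset.sum_congr rfl fun i _ => h2 i,
        Finset.sum_range_sub (fun i => g ⟨min i n, by omega⟩)]
      simp [hd]
    rw [htel]
    have hkk : (⟨min k.1 n, by omega⟩ : Fin (n+1)) = k := by
      apply Fin.ext
      simp
      omega
    rw [hkk, mul_comm]
  rw [claim1 p, claim1 x]
  refine Finset.sum_le_sum fun j hj => ?_
  rcases Nat.eq_zero_or_pos j with rfl | hjpos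
  · have huniv : (univ.filter (fun k : Fin (n+1) => 0 ≤ k.1)) = univ := by simp
    rw [huniv, htot]
  · have hdj : 0 ≤ d j := by
      have hmono : g ⟨min (j-1) n, by omega⟩ ≤ g ⟨min j n, by omega⟩ := by
        exact hg (Fin.mk_le_mk.mpr (by omega))
      simp only [hd]
      rw [if_neg (by omega)]
      linarith
    exact mul_le_mul_of_nonneg_left (htail j hjpos (mem_range.mp hj)) hdj


lemma avg_swap {N : ℕ} (ε : Fin N → ℝ) (u v : Fin N → ℝ) :
    ∑ k, u k * ((∑ q ∈ univ.filter (fun q => ε q = ε k), v q) /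
        ((univ.filter (fun q => ε q = ε k)).card : ℝ))
    = ∑ k, ((∑ q ∈ univ.filter (fun q => ε q = ε k), u q) /
        ((univ.filter (fun q => ε q = ε k)).card : ℝ)) * v k := by
  have hfib : ∀ k q : Fin N, ε q = ε k →
      (univ.filter (fun r => ε r = ε k)) = (univ.filter (fun r => ε r = ε q)) := by
    intro k q h
    apply Finset.filter_congr
    intro r _
    simp [h]
  have lhs : ∑ k, u k * ((∑ q ∈ univ.filter (fun q => ε q = ε k), v q) /
        ((univ.filter (fun q => ε q = ε k)).card : ℝ))
      = ∑ k : Fin N, ∑ q : Fin N,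
          (if ε q = ε k then u k * v q / ((univ.filter (fun r => ε r = ε k)).card : ℝ) else 0) := by
    refine Finset.sum_congr rfl fun k _ => ?_
    rw [div_eq_mul_inv, ← mul_assoc, Finset.mul_sum, Finset.sum_mul, Finset.sum_filter]
    refine Finset.sum_congr rfl fun q _ => ?_
    by_cases h : ε q = ε k <;> simp [h, div_eq_mul_inv]
  have rhs : ∑ k, ((∑ q ∈ univ.filter (fun q => ε q = ε k), u q) /
        ((univ.filter (fun q => ε q = ε k)).card : ℝ)) * v k
      = ∑ k : Fin N, ∑ q : Fin N,
          (if ε q = ε k then u q * v k / ((univ.filter (fun r => ε r = ε k)).card : ℝ) else 0) := by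
    refine Finset.sum_congr rfl fun k _ => ?_
    rw [div_eq_mul_inv, mul_assoc, mul_comm ((((univ.filter (fun q => ε q = ε k)).card : ℝ))⁻¹) (v k), ← mul_assoc, Finset.sum_mul, Finset.sum_mul, Finset.sum_filter]
    refine Finset.sum_congr rfl fun q _ => ?_
    by_cases h : ε q = ε k <;> simp [h, div_eq_mul_inv] <;> ring
  rw [lhs, rhs, Finset.sum_comm]
  refine Finset.sum_congr rfl fun a _ => Finset.sum_congr rfl fun b _ => ?_
  by_cases h : ε a = ε b
  · rw [if_pos h, if_pos h.symm, hfib b a h, mul_comm (u b) (v a)]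
  · rw [if_neg h, if_neg (fun hh => h hh.symm)]

lemma stmt9_aux (n : ℕ) (ετ : Fin (n+1) → ℝ)
    (p : Fin (n+1) → ℝ)
    (hpmono : ∀ k m : Fin (n+1), m ≤ k → p k ≤ p m)
    (P : Matrix (Fin (n+1)) (Fin (n+1)) ℝ)
    (hP0 : ∀ k m, 0 ≤ P k m) (hProw : ∀ k, ∑ m, P k m = 1) (hPcol : ∀ m, ∑ k, P k m = 1)
    (p' : Fin (n+1) → ℝ) (hp' : ∀ k, p' k = ∑ m, P k m * p m)
    (xx : Fin (n+1) → ℝ)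
    (hxx : ∀ k, xx k = (∑ q ∈ univ.filter (fun q => ετ q = ετ k), p' q) /
      ((univ.filter (fun q => ετ q = ετ k)).card : ℝ))
    (g : Fin (n+1) → ℝ) (hg : Monotone g) :
    ∑ k, p k * g k ≤ ∑ k, xx k * g k := by
  have hfibτ : ∀ k q : Fin (n+1), ετ q = ετ k →
      (univ.filter (fun r => ετ r = ετ k)) = (univ.filter (fun r => ετ r = ετ q)) := by
    intro k q h
    apply Finset.filter_congr
    intro r _
    simp [h]
  have hcardτ : ∀ k : Fin (n+1), 0 < (univ.filter (fun q => ετ q = ετ k)).card :=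
    fun k => Finset.card_pos.mpr ⟨k, by simp⟩
  set D : Fin (n+1) → Fin (n+1) → ℝ := fun k m =>
    if ετ m = ετ k then (((univ.filter (fun q => ετ q = ετ k)).card : ℝ))⁻¹ else 0 with hD
  set M : Fin (n+1) → Fin (n+1) → ℝ := fun k m => ∑ l, D k l * P l m with hM
  have hD0 : ∀ k m, 0 ≤ D k m := by
    intro k m
    simp only [hD]
    by_cases h : ετ m = ετ k
    · simp only [if_pos h]
      positivity
    · simp [h]
  have hDrow : ∀ k, ∑ m, D k m = 1 := by
    intro k
    have h1 : ∑ m, D k m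
        = ∑ m ∈ univ.filter (fun m => ετ m = ετ k),
            (((univ.filter (fun q => ετ q = ετ k)).card : ℝ))⁻¹ := by
      rw [Finset.sum_filter]
    rw [h1, Finset.sum_const, nsmul_eq_mul]
    rw [mul_inv_cancel₀]
    exact_mod_cast (hcardτ k).ne'
  have hDcol : ∀ m, ∑ k, D k m = 1 := by
    intro m
    have h0 : ∀ k, D k m = if ετ k = ετ m
        then (((univ.filter (fun q => ετ q = ετ m)).card : ℝ))⁻¹ else 0 := by
      intro k
      simp only [hD]
      by_cases h : ετ m = ετ k
      · rw [if_pos h, if_pos h.symm, hfibτ k m h]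
      · rw [if_neg h, if_neg (fun hh => h hh.symm)]
    rw [Finset.sum_congr rfl fun k _ => h0 k]
    have h1 : ∑ k : Fin (n+1), (if ετ k = ετ m
        then (((univ.filter (fun q => ετ q = ετ m)).card : ℝ))⁻¹ else 0)
        = ∑ k ∈ univ.filter (fun k => ετ k = ετ m),
            (((univ.filter (fun q => ετ q = ετ m)).card : ℝ))⁻¹ := by
      rw [Finset.sum_filter]
    rw [h1, Finset.sum_const, nsmul_eq_mul, mul_inv_cancel₀]
    exact_mod_cast (hcardτ m).ne'
  have hM0 : ∀ k m, 0 ≤ M k m :=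
    fun k m => Finset.sum_nonneg fun l _ => mul_nonneg (hD0 k l) (hP0 l m)
  have hMrow : ∀ k, ∑ m, M k m = 1 := by
    intro k
    simp only [hM]
    rw [Finset.sum_comm]
    have : ∀ l : Fin (n+1), ∑ m, D k l * P l m = D k l := by
      intro l
      rw [← Finset.mul_sum, hProw, mul_one]
    rw [Finset.sum_congr rfl fun l _ => this l]
    exact hDrow k
  have hMcol : ∀ m, ∑ k, M k m = 1 := by
    intro m
    simp only [hM]
    rw [Finset.sum_comm]
    have : ∀ l : Fin (n+1), ∑ k, D k l * P l m = P l m := by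
      intro l
      rw [← Finset.sum_mul, hDcol, one_mul]
    rw [Finset.sum_congr rfl fun l _ => this l]
    exact hPcol m
  have hxxM : ∀ k, xx k = ∑ m, M k m * p m := by
    intro k
    have h1 : ∑ m, M k m * p m = ∑ l, D k l * p' l := by
      simp only [hM]
      have e1 : ∀ m : Fin (n+1), (∑ l, D k l * P l m) * p m = ∑ l, D k l * P l m * p m :=
        fun m => Finset.sum_mul _ _ _
      rw [Finset.sum_congr rfl fun m _ => e1 m, Finset.sum_comm]
      refine Finset.sum_congr rfl fun l _ => ?_
      rw [hp' l, Finset.mul_sum]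
      exact Finset.sum_congr rfl fun m _ => by ring
    have h2 : ∑ l, D k l * p' l
        = (∑ q ∈ univ.filter (fun q => ετ q = ετ k), p' q) /
            ((univ.filter (fun q => ετ q = ετ k)).card : ℝ) := by
      have e2 : ∑ l, D k l * p' l
          = ∑ l ∈ univ.filter (fun l => ετ l = ετ k),
              (((univ.filter (fun q => ετ q = ετ k)).card : ℝ))⁻¹ * p' l := by
        rw [Finset.sum_filter]
        refine Finset.sum_congr rfl fun l _ => ?_
        simp only [hD]
        by_cases h : ετ l = ετ k <;> simp [h]
      rw [e2, ← Finset.mul_sum, inv_mul_eq_div]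
    rw [hxx k, h1, h2]
  have htot : ∑ k, xx k = ∑ k, p k := by
    rw [Finset.sum_congr rfl fun k _ => hxxM k, Finset.sum_comm]
    refine Finset.sum_congr rfl fun m _ => ?_
    rw [← Finset.sum_mul, hMcol, one_mul]
  have htail : ∀ j : ℕ, 0 < j → j < n+1 →
      ∑ k ∈ univ.filter (fun k : Fin (n+1) => j ≤ k.1), p k ≤
        ∑ k ∈ univ.filter (fun k : Fin (n+1) => j ≤ k.1), xx k := by
    intro j _ hjlt
    set c : Fin (n+1) → ℝ := fun m => ∑ k ∈ univ.filter (fun k : Fin (n+1) => j ≤ k.1), M k m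
      with hc
    have hc0 : ∀ m, 0 ≤ c m := fun m => Finset.sum_nonneg fun k _ => hM0 k m
    have hc1 : ∀ m, c m ≤ 1 := by
      intro m
      have := Finset.sum_le_sum_of_subset_of_nonneg
        (Finset.filter_subset (fun k : Fin (n+1) => j ≤ k.1) univ)
        (fun i _ _ => hM0 i m)
      calc c m ≤ ∑ k, M k m := this
        _ = 1 := hMcol m
    have hcsum : ∑ m, c m
        = (((univ.filter (fun k : Fin (n+1) => j ≤ k.1)).card : ℝ)) := by
      simp only [hc]
      rw [Finset.sum_comm]
      rw [Finset.sum_congr rfl fun k _ => hMrow k]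
      simp
    have hkey := key1 p hpmono c hc0 hc1 ⟨j, hjlt⟩ hcsum
    have hrhs : ∑ m, c m * p m = ∑ k ∈ univ.filter (fun k : Fin (n+1) => j ≤ k.1), xx k := by
      simp only [hc]
      rw [Finset.sum_congr rfl fun m (_ : m ∈ univ) => Finset.sum_mul _ _ (p m), Finset.sum_comm]
      exact Finset.sum_congr rfl fun k _ => (hxxM k).symm
    rw [hrhs] at hkey
    exact hkey
  exact abel_ge g hg p xx htot htail

/-- Quantum H-theorem with degeneracies (Theorem 2): for nondecreasing initial and
final spectra `ε⁰, ετ`, with `ln 𝒩_k` the arithmetic mean of `ln q` over the level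
set containing `k`, if `p` is a nonincreasing probability distribution constant on
each initial level set and `p' = P·p` for a doubly stochastic `P`, then
`∑ p'_k ln 𝒩^τ_k ≥ ∑ p_k ln 𝒩⁰_k`. -/
theorem stmt9 (N : ℕ) (ε0 ετ : Fin N → ℝ) (hε0 : Monotone ε0) (hετ : Monotone ετ)
    (lnN0 lnNτ : Fin N → ℝ)
    (hlnN0 : ∀ k, lnN0 k =
      (∑ q ∈ Finset.univ.filter (fun q => ε0 q = ε0 k), Real.log (q.1 + 1)) /
        (Finset.univ.filter (fun q => ε0 q = ε0 k)).card)
    (hlnNτ : ∀ k, lnNτ k =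
      (∑ q ∈ Finset.univ.filter (fun q => ετ q = ετ k), Real.log (q.1 + 1)) /
        (Finset.univ.filter (fun q => ετ q = ετ k)).card)
    (p : Fin N → ℝ) (hp0 : ∀ k, 0 ≤ p k) (hp1 : ∑ k, p k = 1)
    (hpmono : ∀ k m : Fin N, m ≤ k → p k ≤ p m)
    (hpconst : ∀ k m, ε0 k = ε0 m → p k = p m)
    (P : Matrix (Fin N) (Fin N) ℝ)
    (hP0 : ∀ k m, 0 ≤ P k m) (hProw : ∀ k, ∑ m, P k m = 1) (hPcol : ∀ m, ∑ k, P k m = 1)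
    (p' : Fin N → ℝ) (hp' : ∀ k, p' k = ∑ m, P k m * p m) :
    ∑ k, p' k * lnNτ k ≥ ∑ k, p k * lnN0 k := by
  rcases Nat.eq_zero_or_pos N with hN | hN
  · subst hN
    simp
  obtain ⟨n, rfl⟩ : ∃ n, N = n + 1 := ⟨N - 1, by omega⟩
  set g : Fin (n+1) → ℝ := fun k => Real.log (k.1 + 1) with hgdef
  have hg : Monotone g := by
    intro a b hab
    have h1 : (0:ℝ) < (a.1 : ℝ) + 1 := by positivity
    have h2 : ((a.1 : ℝ)) ≤ (b.1 : ℝ) := Nat.cast_le.mpr hab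
    exact Real.log_le_log h1 (by linarith)
  have hcard0 : ∀ k : Fin (n+1), 0 < (univ.filter (fun q => ε0 q = ε0 k)).card :=
    fun k => Finset.card_pos.mpr ⟨k, by simp⟩
  have e0 : ∑ k, p k * lnN0 k = ∑ k, p k * g k := by
    have h1 : ∑ k, p k * lnN0 k
        = ∑ k, p k * ((∑ q ∈ univ.filter (fun q => ε0 q = ε0 k), g q) /
            ((univ.filter (fun q => ε0 q = ε0 k)).card : ℝ)) := by
      refine Finset.sum_congr rfl fun k _ => ?_
      rw [hlnN0 k]
    rw [h1, avg_swap ε0 p g]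
    refine Finset.sum_congr rfl fun k _ => ?_
    congr 1
    have hsc : ∑ q ∈ univ.filter (fun q => ε0 q = ε0 k), p q
        = ((univ.filter (fun q => ε0 q = ε0 k)).card : ℝ) * p k := by
      rw [Finset.sum_congr rfl fun q hq => hpconst q k ((Finset.mem_filter.mp hq).2),
        Finset.sum_const, nsmul_eq_mul]
    rw [hsc, mul_div_cancel_left₀]
    exact Nat.cast_ne_zero.mpr (hcard0 k).ne'
  set xx : Fin (n+1) → ℝ := fun k =>
    (∑ q ∈ univ.filter (fun q => ετ q = ετ k), p' q) /
      ((univ.filter (fun q => ετ q = ετ k)).card : ℝ) with hxx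
  have eτ : ∑ k, p' k * lnNτ k = ∑ k, xx k * g k := by
    have h1 : ∑ k, p' k * lnNτ k
        = ∑ k, p' k * ((∑ q ∈ univ.filter (fun q => ετ q = ετ k), g q) /
            ((univ.filter (fun q => ετ q = ετ k)).card : ℝ)) := by
      refine Finset.sum_congr rfl fun k _ => ?_
      rw [hlnNτ k]
    rw [h1, avg_swap ετ p' g]
  rw [ge_iff_le, e0, eτ]
  exact stmt9_aux n ετ p hpmono P hP0 hProw hPcol p' hp' xx (fun k => rfl) g hg
end

section
/- Let p be a probability distribution on {1,...,N} that is nonincreasing and constant on each block of a partition π into intervals, let P be doubly stochastic, p' = P·p, and p̄ = V·p' where V is the block-averaging matrix of a second partition π' into intervals. Then p̄ = (V·P)·p with V·P doubly stochastic, and consequently ∑_k p̄_k ln k ≥ ∑_k p_k ln k. -/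
open Finset

/-- Majorization partial-sum lemma: for doubly stochastic `Q` and nonincreasing `p`,
the partial sums of `Q·p` are bounded by those of `p`. -/
lemma maj_aux (N : ℕ) (Q : Matrix (Fin N) (Fin N) ℝ)
    (hQ0 : ∀ k m, 0 ≤ Q k m) (hQrow : ∀ k, ∑ m, Q k m = 1) (hQcol : ∀ m, ∑ k, Q k m = 1)
    (p : Fin N → ℝ) (hpmono : ∀ k m : Fin N, m ≤ k → p k ≤ p m) (j : Fin N) :
    ∑ k ∈ univ.filter (fun k => k ≤ j), (∑ m, Q k m * p m) ≤
      ∑ k ∈ univ.filter (fun k => k ≤ j), p k := by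
  set S := univ.filter (fun k : Fin N => k ≤ j) with hS
  set T := univ.filter (fun k : Fin N => ¬ k ≤ j) with hT
  set c : Fin N → ℝ := fun m => ∑ k ∈ S, Q k m with hc
  have hc0 : ∀ m, 0 ≤ c m := fun m => Finset.sum_nonneg fun k _ => hQ0 k m
  have hc1 : ∀ m, c m ≤ 1 := by
    intro m
    rw [← hQcol m]
    exact Finset.sum_le_sum_of_subset_of_nonneg (Finset.subset_univ S)
      (fun k _ _ => hQ0 k m)
  have hcsum : ∑ m, c m = (S.card : ℝ) := by
    rw [Finset.sum_comm]
    simp [hQrow]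
  have hLHS : ∑ k ∈ S, (∑ m, Q k m * p m) = ∑ m, c m * p m := by
    rw [Finset.sum_comm]
    simp [hc, Finset.sum_mul]
  have hsplit : ∑ m ∈ S, c m * p m + ∑ m ∈ T, c m * p m = ∑ m, c m * p m :=
    Finset.sum_filter_add_sum_filter_not univ _ _
  have hsplitc : ∑ m ∈ S, c m + ∑ m ∈ T, c m = (S.card : ℝ) := by
    rw [Finset.sum_filter_add_sum_filter_not]; exact hcsum
  have h1 : ∑ m ∈ S, (1 - c m) * p j ≤ ∑ m ∈ S, (1 - c m) * p m := by
    apply Finset.sum_le_sum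
    intro m hm
    have hmj : m ≤ j := (Finset.mem_filter.mp hm).2
    exact mul_le_mul_of_nonneg_left (hpmono j m hmj) (by linarith [hc1 m])
  have h2 : ∑ m ∈ T, c m * p m ≤ ∑ m ∈ T, c m * p j := by
    apply Finset.sum_le_sum
    intro m hm
    have hmj : j ≤ m := le_of_not_ge (Finset.mem_filter.mp hm).2
    exact mul_le_mul_of_nonneg_left (hpmono m j hmj) (hc0 m)
  have e1 : ∑ m ∈ S, (1 - c m) * p m = ∑ m ∈ S, p m - ∑ m ∈ S, c m * p m := by
    simp [sub_mul, Finset.sum_sub_distrib]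
  have e2 : ∑ m ∈ S, (1 - c m) * p j = (S.card : ℝ) * p j - (∑ m ∈ S, c m) * p j := by
    simp [sub_mul, Finset.sum_sub_distrib, Finset.sum_mul]
  have e3 : ∑ m ∈ T, c m * p j = (∑ m ∈ T, c m) * p j := by
    rw [Finset.sum_mul]
  have e4 : ((S.card : ℝ)) * p j = (∑ m ∈ S, c m) * p j + (∑ m ∈ T, c m) * p j := by
    rw [← add_mul, hsplitc]
  rw [hLHS, ← hsplit]
  linarith [h1, h2]

/-- With `p` a nonincreasing probability distribution constant on each block of an
interval partition `π` (encoded by the equivalence relation `r`), `P` doubly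
stochastic, `p' = P·p`, and `p̄ = V·p'` for the block-averaging matrix `V` of a
second interval partition `π'` (relation `r'`): then `p̄ = (V·P)·p`, the product
`V·P` is doubly stochastic, and `∑ p̄_k ln k ≥ ∑ p_k ln k`. -/
theorem stmt11 (N : ℕ)
    (r : Fin N → Fin N → Prop) [DecidableRel r] (hr : Equivalence r)
    (hrInt : ∀ k m q : Fin N, r k m → k ≤ q → q ≤ m → r k q)
    (r' : Fin N → Fin N → Prop) [DecidableRel r'] (hr' : Equivalence r')
    (hr'Int : ∀ k m q : Fin N, r' k m → k ≤ q → q ≤ m → r' k q)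
    (p : Fin N → ℝ) (hp0 : ∀ k, 0 ≤ p k) (hp1 : ∑ k, p k = 1)
    (hpmono : ∀ k m : Fin N, m ≤ k → p k ≤ p m)
    (hpconst : ∀ k m, r k m → p k = p m)
    (P : Matrix (Fin N) (Fin N) ℝ)
    (hP0 : ∀ k m, 0 ≤ P k m) (hProw : ∀ k, ∑ m, P k m = 1) (hPcol : ∀ m, ∑ k, P k m = 1)
    (V : Matrix (Fin N) (Fin N) ℝ)
    (hV : ∀ k m, V k m =
      if r' k m then (1 : ℝ) / (Finset.univ.filter (fun q => r' k q)).card else 0)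
    (p' : Fin N → ℝ) (hp' : ∀ k, p' k = ∑ m, P k m * p m)
    (pbar : Fin N → ℝ) (hpbar : ∀ k, pbar k = ∑ m, V k m * p' m) :
    (∀ k, pbar k = ∑ m, (V * P) k m * p m) ∧
    ((∀ k m, 0 ≤ (V * P) k m) ∧ (∀ k, ∑ m, (V * P) k m = 1) ∧ (∀ m, ∑ k, (V * P) k m = 1)) ∧
    ∑ k, pbar k * Real.log (k.1 + 1) ≥ ∑ k, p k * Real.log (k.1 + 1) := by
  classical
  -- basic facts about the classes of r'
  have hclasspos : ∀ k : Fin N, 0 < (univ.filter (fun q => r' k q)).card := by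
    intro k
    exact Finset.card_pos.mpr ⟨k, by simp [hr'.refl k]⟩
  have hclasseq : ∀ k m : Fin N, r' k m →
      (univ.filter fun q => r' k q) = (univ.filter fun q => r' m q) := by
    intro k m hkm
    ext q
    simp only [Finset.mem_filter, Finset.mem_univ, true_and]
    exact ⟨fun h => hr'.trans (hr'.symm hkm) h, fun h => hr'.trans hkm h⟩
  -- V is doubly stochastic
  have hV0 : ∀ k m, 0 ≤ V k m := by
    intro k m
    rw [hV]
    split <;> positivity
  have hVrow : ∀ k, ∑ m, V k m = 1 := by
    intro k
    have h1 : ∑ m, V k m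
        = ∑ m ∈ univ.filter (fun q => r' k q),
            (1 : ℝ) / (univ.filter (fun q => r' k q)).card := by
      rw [Finset.sum_filter]
      exact Finset.sum_congr rfl fun m _ => hV k m
    rw [h1, Finset.sum_const, nsmul_eq_mul, mul_one_div,
      div_self (by exact_mod_cast (hclasspos k).ne')]
  have hVcol : ∀ m, ∑ k, V k m = 1 := by
    intro m
    have step : ∀ k, V k m
        = if r' m k then (1 : ℝ) / (univ.filter (fun q => r' m q)).card else 0 := by
      intro k
      rw [hV]
      by_cases h : r' k m
      · rw [if_pos h, if_pos (hr'.symm h), hclasseq k m h]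
      · rw [if_neg h, if_neg (fun h' => h (hr'.symm h'))]
    calc ∑ k, V k m
        = ∑ k, if r' m k then (1 : ℝ) / (univ.filter (fun q => r' m q)).card else 0 :=
          Finset.sum_congr rfl fun k _ => step k
      _ = 1 := by
          rw [← Finset.sum_filter, Finset.sum_const, nsmul_eq_mul, mul_one_div,
            div_self (by exact_mod_cast (hclasspos m).ne')]
  -- V*P is doubly stochastic
  have hQ0 : ∀ k m, 0 ≤ (V * P) k m := by
    intro k m
    rw [Matrix.mul_apply]
    exact Finset.sum_nonneg fun l _ => mul_nonneg (hV0 k l) (hP0 l m)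
  have hQrow : ∀ k, ∑ m, (V * P) k m = 1 := by
    intro k
    simp only [Matrix.mul_apply]
    rw [Finset.sum_comm]
    simp_rw [← Finset.mul_sum, hProw, mul_one]
    exact hVrow k
  have hQcol : ∀ m, ∑ k, (V * P) k m = 1 := by
    intro m
    simp only [Matrix.mul_apply]
    rw [Finset.sum_comm]
    simp_rw [← Finset.sum_mul, hVcol, one_mul]
    exact hPcol m
  -- pbar = (V*P)·p
  have part1 : ∀ k, pbar k = ∑ m, (V * P) k m * p m := by
    intro k
    calc pbar k = ∑ m, ∑ l, V k m * (P m l * p l) := by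
          rw [hpbar]
          exact Finset.sum_congr rfl fun m _ => by rw [hp', Finset.mul_sum]
      _ = ∑ l, ∑ m, V k m * (P m l * p l) := Finset.sum_comm
      _ = ∑ l, (∑ m, V k m * P m l) * p l := by
          refine Finset.sum_congr rfl fun l _ => ?_
          rw [Finset.sum_mul]
          exact Finset.sum_congr rfl fun m _ => by ring
      _ = ∑ m, (V * P) k m * p m := by simp [Matrix.mul_apply]
  -- total mass of pbar
  have hqsum : ∑ k, pbar k = 1 := by
    simp_rw [part1]
    rw [Finset.sum_comm]
    simp_rw [← Finset.sum_mul, hQcol, one_mul]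
    exact hp1
  refine ⟨part1, ⟨hQ0, hQrow, hQcol⟩, ?_⟩
  -- tail sums of pbar - p are nonnegative
  have tail : ∀ j, j < N → 0 ≤ ∑ k ∈ univ.filter (fun k : Fin N => j < k.1), (pbar k - p k) := by
    intro j hj
    set jf : Fin N := ⟨j, hj⟩ with hjf
    have hset : univ.filter (fun k : Fin N => j < k.1) = univ.filter (fun k => ¬ k ≤ jf) := by
      ext k
      simp only [Finset.mem_filter, Finset.mem_univ, true_and, Fin.le_def, hjf, not_le]
    have h1 : ∑ k ∈ univ.filter (fun k => k ≤ jf), pbar k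
        ≤ ∑ k ∈ univ.filter (fun k => k ≤ jf), p k := by
      have hm := maj_aux N (V * P) hQ0 hQrow hQcol p hpmono jf
      refine le_trans (le_of_eq (Finset.sum_congr rfl fun k _ => part1 k)) hm
    have h2 : ∑ k ∈ univ.filter (fun k => k ≤ jf), pbar k
        + ∑ k ∈ univ.filter (fun k => ¬ k ≤ jf), pbar k = 1 := by
      rw [Finset.sum_filter_add_sum_filter_not]; exact hqsum
    have h3 : ∑ k ∈ univ.filter (fun k => k ≤ jf), p k
        + ∑ k ∈ univ.filter (fun k => ¬ k ≤ jf), p k = 1 := by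
      rw [Finset.sum_filter_add_sum_filter_not]; exact hp1
    rw [hset, Finset.sum_sub_distrib]
    linarith
  -- Abel summation via telescoping of the logarithm
  set δ : ℕ → ℝ := fun j => Real.log ((j : ℝ) + 2) - Real.log ((j : ℝ) + 1) with hδ
  have hδ0 : ∀ j, 0 ≤ δ j := by
    intro j
    have h := Real.log_le_log (by positivity : (0:ℝ) < (j : ℝ) + 1)
      (by linarith : ((j : ℝ) + 1) ≤ (j : ℝ) + 2)
    simpa [hδ] using sub_nonneg.mpr h
  have hf : ∀ k : Fin N, Real.log ((k.1 : ℝ) + 1) = ∑ j ∈ Finset.range k.1, δ j := by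
    intro k
    have ht := Finset.sum_range_sub (f := fun i : ℕ => Real.log ((i : ℝ) + 1)) k.1
    have hcong : ∑ j ∈ Finset.range k.1, δ j
        = ∑ i ∈ Finset.range k.1, (Real.log (((i+1 : ℕ) : ℝ) + 1) - Real.log ((i : ℝ) + 1)) := by
      refine Finset.sum_congr rfl fun i _ => ?_
      have : (((i+1 : ℕ)) : ℝ) + 1 = (i : ℝ) + 2 := by push_cast; ring
      rw [this]
    rw [hcong, ht]
    simp
  have key : 0 ≤ ∑ k, (pbar k - p k) * Real.log ((k.1 : ℝ) + 1) := by
    have step1 : ∑ k, (pbar k - p k) * Real.log ((k.1 : ℝ) + 1)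
        = ∑ j ∈ Finset.range N,
            (∑ k ∈ univ.filter (fun k : Fin N => j < k.1), (pbar k - p k)) * δ j := by
      calc ∑ k, (pbar k - p k) * Real.log ((k.1 : ℝ) + 1)
          = ∑ k : Fin N, ∑ j ∈ Finset.range k.1, (pbar k - p k) * δ j := by
            refine Finset.sum_congr rfl fun k _ => ?_
            rw [hf k, Finset.mul_sum]
        _ = ∑ k : Fin N, ∑ j ∈ Finset.range N,
              (if j < k.1 then (pbar k - p k) * δ j else 0) := by
            refine Finset.sum_congr rfl fun k _ => ?_
            have hk := k.isLt
            have : Finset.range k.1 = (Finset.range N).filter (fun j => j < k.1) := by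
              ext j
              simp only [Finset.mem_range, Finset.mem_filter]
              omega
            rw [this, Finset.sum_filter]
        _ = ∑ j ∈ Finset.range N, ∑ k : Fin N,
              (if j < k.1 then (pbar k - p k) * δ j else 0) := Finset.sum_comm
        _ = ∑ j ∈ Finset.range N,
              (∑ k ∈ univ.filter (fun k : Fin N => j < k.1), (pbar k - p k)) * δ j := by
            refine Finset.sum_congr rfl fun j _ => ?_
            rw [Finset.sum_mul, Finset.sum_filter]
    rw [step1]
    refine Finset.sum_nonneg fun j hj => ?_
    exact mul_nonneg (tail j (Finset.mem_range.mp hj)) (hδ0 j)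
  have expand : ∑ k, (pbar k - p k) * Real.log ((k.1 : ℝ) + 1)
      = ∑ k, pbar k * Real.log ((k.1 : ℝ) + 1) - ∑ k, p k * Real.log ((k.1 : ℝ) + 1) := by
    simp [sub_mul, Finset.sum_sub_distrib]
  rw [ge_iff_le]
  linarith [key, expand.symm, expand]
end
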